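/- arXiv:2310.01770 — 3 statements merged into one kernel-verified Lean document; each statement's English description precedes it below -/
import Mathlib

section
/- (MLS bound) Let f(x) = g(Wx) with g differentiable, x_1,...,x_n nonzero inputs, and let S = (1/n) Σ_i ‖∇_W f(x_i)‖_F^2 where ∇_W f(x_i) denotes the derivative of W ↦ g(Wx_i). Then (1/n) Σ_i ‖∇_x f(x_i)‖_2 ≤ ‖W‖_2 · sqrt((1/n) Σ_i 1/‖x_i‖_2^2) · S^{1/2}. -/
noncomputable def frobNorm {m n : Type*} [Fintype m] [Fintype n]
    (A : Matrix m n ℝ) : ℝ :=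
  Real.sqrt (∑ i, ∑ j, (A i j) ^ 2)

noncomputable def specNorm {m n : Type*} [Fintype m] [Fintype n] [DecidableEq n]
    (A : Matrix m n ℝ) : ℝ :=
  ‖LinearMap.toContinuousLinearMap (Matrix.toEuclideanLin A)‖

lemma specNorm_nonneg {m n : Type*} [Fintype m] [Fintype n] [DecidableEq n]
    (A : Matrix m n ℝ) : 0 ≤ specNorm A := norm_nonneg _

lemma frobNorm_nonneg {m n : Type*} [Fintype m] [Fintype n]
    (A : Matrix m n ℝ) : 0 ≤ frobNorm A := Real.sqrt_nonneg _

lemma specNorm_mul_le {m n p : Type*} [Fintype m] [Fintype n] [Fintype p]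
    [DecidableEq n] [DecidableEq p] (A : Matrix m n ℝ) (B : Matrix n p ℝ) :
    specNorm (A * B) ≤ specNorm A * specNorm B := by
  have h : LinearMap.toContinuousLinearMap (Matrix.toEuclideanLin (A * B)) =
      (LinearMap.toContinuousLinearMap (Matrix.toEuclideanLin A)).comp
        (LinearMap.toContinuousLinearMap (Matrix.toEuclideanLin B)) := by
    ext v i
    simp [Matrix.toEuclideanLin_apply, Matrix.mulVec_mulVec]
  rw [specNorm, h]
  exact ContinuousLinearMap.opNorm_comp_le _ _

lemma specNorm_le_frobNorm {m n : Type*} [Fintype m] [Fintype n] [DecidableEq n]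
    (A : Matrix m n ℝ) : specNorm A ≤ frobNorm A := by
  apply ContinuousLinearMap.opNorm_le_bound _ (frobNorm_nonneg A)
  intro v
  rw [LinearMap.coe_toContinuousLinearMap', Matrix.toEuclideanLin_apply]
  have hv : ‖v‖ = Real.sqrt (∑ j, (v j) ^ 2) := by
    rw [EuclideanSpace.norm_eq]; congr 1; simp [sq_abs]
  rw [EuclideanSpace.norm_eq]
  simp only [WithLp.ofLp_toLp]
  calc Real.sqrt (∑ i, ‖(A.mulVec ((WithLp.equiv 2 (n → ℝ)) v)) i‖ ^ 2)
      ≤ Real.sqrt (∑ i, (∑ j, (A i j)^2) * (∑ j, (v j)^2)) := by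
        apply Real.sqrt_le_sqrt
        apply Finset.sum_le_sum
        intro i _
        rw [Real.norm_eq_abs, sq_abs]
        exact Finset.sum_mul_sq_le_sq_mul_sq _ _ _
    _ = frobNorm A * ‖v‖ := by
        rw [← Finset.sum_mul, frobNorm, hv, ← Real.sqrt_mul (by positivity)]

/-- MLS bound: for `f x = g (W x)` with Jacobian of `g` at `W xᵢ` given by the
matrix `Jᵢ` (so that `∇ₓ f (xᵢ) = Jᵢ W` and `‖∇_W f (xᵢ)‖_F = ‖Jᵢ‖_F ‖xᵢ‖₂`),
and `S = (1/n) ∑ᵢ ‖∇_W f (xᵢ)‖_F²`, the maximum local sensitivity satisfies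
`(1/n) ∑ᵢ ‖Jᵢ W‖₂ ≤ ‖W‖₂ · sqrt ((1/n) ∑ᵢ 1/‖xᵢ‖₂²) · S^{1/2}`. -/
theorem mls_bound {n d M N : ℕ}
    (W : Matrix (Fin d) (Fin M) ℝ)
    (x : Fin n → EuclideanSpace ℝ (Fin M)) (hx : ∀ i, x i ≠ 0)
    (J : Fin n → Matrix (Fin N) (Fin d) ℝ) :
    (1 / (n : ℝ)) * ∑ i, specNorm (J i * W) ≤
      specNorm W * Real.sqrt ((1 / (n : ℝ)) * ∑ i, 1 / ‖x i‖ ^ 2) *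
        Real.sqrt ((1 / (n : ℝ)) * ∑ i, (frobNorm (J i) * ‖x i‖) ^ 2) := by
  have hxpos : ∀ i, (0:ℝ) < ‖x i‖ := fun i => norm_pos_iff.mpr (hx i)
  have h1 : ∑ i, specNorm (J i * W) ≤
      specNorm W * ∑ i, (1 / ‖x i‖) * (frobNorm (J i) * ‖x i‖) := by
    rw [Finset.mul_sum]
    apply Finset.sum_le_sum
    intro i _
    have he : (1 / ‖x i‖) * (frobNorm (J i) * ‖x i‖) = frobNorm (J i) := by
      rw [mul_comm (frobNorm (J i)) ‖x i‖, ← mul_assoc, one_div,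
        inv_mul_cancel₀ (hxpos i).ne', one_mul]
    rw [he, mul_comm]
    exact (specNorm_mul_le _ _).trans
      (mul_le_mul_of_nonneg_right (specNorm_le_frobNorm _) (specNorm_nonneg _))
  have h2 : ∑ i, (1 / ‖x i‖) * (frobNorm (J i) * ‖x i‖) ≤
      Real.sqrt (∑ i, (1 / ‖x i‖)^2) * Real.sqrt (∑ i, (frobNorm (J i) * ‖x i‖)^2) :=
    Real.sum_mul_le_sqrt_mul_sqrt _ _ _
  have hn : (0:ℝ) ≤ 1 / (n:ℝ) := by positivity
  calc (1 / (n : ℝ)) * ∑ i, specNorm (J i * W)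
      ≤ (1 / (n : ℝ)) * (specNorm W *
          (Real.sqrt (∑ i, (1 / ‖x i‖)^2) * Real.sqrt (∑ i, (frobNorm (J i) * ‖x i‖)^2))) := by
        apply mul_le_mul_of_nonneg_left _ hn
        exact h1.trans (mul_le_mul_of_nonneg_left h2 (specNorm_nonneg _))
    _ = specNorm W * Real.sqrt ((1 / (n : ℝ)) * ∑ i, 1 / ‖x i‖ ^ 2) *
        Real.sqrt ((1 / (n : ℝ)) * ∑ i, (frobNorm (J i) * ‖x i‖) ^ 2) := by
        have h1n : ∑ i, 1 / ‖x i‖ ^ 2 = ∑ i : Fin n, (1 / ‖x i‖)^2 := by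
          simp [div_pow]
        rw [h1n, Real.sqrt_mul hn, Real.sqrt_mul hn]
        obtain ⟨s, hs⟩ : ∃ s, Real.sqrt (1 / (n:ℝ)) = s := ⟨_, rfl⟩
        have h2s : s * s = 1 / (n:ℝ) := by rw [← hs]; exact Real.mul_self_sqrt hn
        rw [hs, ← h2s]
        ring
end

section
/- (Volumetric ratio bound, per-sample form) Let f(x) = g(Wx) with g differentiable into R^N, and x ≠ 0. Then sqrt(det(∇_x f · (∇_x f)ᵀ)) ≤ N^{-N/2} (‖W‖_2/‖x‖_2)^N ‖∇_W f‖_F^N, where ∇_W f has Frobenius norm ‖J‖_F ‖x‖_2 with J the Jacobian of g at Wx. -/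
open Matrix

lemma aux_trace_eq_sum_eigenvalues {n : Type*} [Fintype n] [DecidableEq n]
    {A : Matrix n n ℝ} (hA : A.IsHermitian) :
    A.trace = ∑ i, hA.eigenvalues i := by
  conv_lhs => rw [hA.spectral_theorem]
  rw [Unitary.conjStarAlgAut_apply, Matrix.trace_mul_cycle]
  have : (star (hA.eigenvectorUnitary : Matrix n n ℝ)) * (hA.eigenvectorUnitary : Matrix n n ℝ)
      = 1 := by
    rw [← Unitary.coe_star, ← Submonoid.coe_mul, Unitary.star_mul_self]; rfl
  rw [this, one_mul, trace_diagonal]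
  simp

lemma aux_amgm {N : ℕ} (hN : 0 < N) (μ : Fin N → ℝ) (hμ : ∀ i, 0 ≤ μ i) :
    ∏ i, μ i ≤ ((∑ i, μ i) / N) ^ N := by
  have key := Real.geom_mean_le_arith_mean_weighted Finset.univ (fun _ => 1 / (N : ℝ)) μ
    (fun i _ => by positivity) (by simp [Finset.card_univ]; field_simp) (fun i _ => hμ i)
  have h1 : ∑ i, (1 / (N : ℝ)) * μ i = (∑ i, μ i) / N := by
    rw [Finset.sum_div]; exact Finset.sum_congr rfl fun i _ => by ring
  rw [h1] at key
  have h2 : (∏ i, μ i ^ (1 / (N : ℝ))) ^ N = ∏ i, μ i := by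
    rw [← Finset.prod_pow]
    congr 1; ext i
    rw [← Real.rpow_natCast (μ i ^ (1 / (N : ℝ))) N, ← Real.rpow_mul (hμ i)]
    rw [one_div, inv_mul_cancel₀ (by exact_mod_cast hN.ne'), Real.rpow_one]
  calc ∏ i, μ i = (∏ i, μ i ^ (1 / (N : ℝ))) ^ N := h2.symm
    _ ≤ ((∑ i, μ i) / N) ^ N := by
        apply pow_le_pow_left₀ _ key
        exact Finset.prod_nonneg fun i _ => Real.rpow_nonneg (hμ i) _

lemma aux_specNorm_transpose {d M : ℕ} (W : Matrix (Fin d) (Fin M) ℝ) :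
    specNorm Wᵀ = specNorm W := by
  unfold specNorm
  rw [← Matrix.conjTranspose_eq_transpose_of_trivial,
    Matrix.toEuclideanLin_conjTranspose_eq_adjoint,
    LinearMap.adjoint_toContinuousLinearMap, LinearIsometryEquiv.norm_map]

lemma aux_mulVec_bound {d M : ℕ} (W : Matrix (Fin d) (Fin M) ℝ) (v : Fin d → ℝ) :
    ∑ j, (Wᵀ *ᵥ v) j ^ 2 ≤ specNorm W ^ 2 * ∑ k, v k ^ 2 := by
  have h := (LinearMap.toContinuousLinearMap (Matrix.toEuclideanLin Wᵀ)).le_opNorm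
    ((WithLp.equiv 2 (Fin d → ℝ)).symm v)
  simp only [LinearMap.coe_toContinuousLinearMap',
    WithLp.equiv_symm_apply, Matrix.toEuclideanLin_apply_piLp_toLp] at h
  have hL : ‖(WithLp.equiv 2 (Fin M → ℝ)).symm (Wᵀ *ᵥ v)‖ = Real.sqrt (∑ j, (Wᵀ *ᵥ v) j ^ 2) := by
    rw [EuclideanSpace.norm_eq]
    congr 1
    exact Finset.sum_congr rfl fun j _ => by rw [WithLp.equiv_symm_apply, WithLp.ofLp_toLp, Real.norm_eq_abs, sq_abs]
  have hR : ‖(WithLp.equiv 2 (Fin d → ℝ)).symm v‖ = Real.sqrt (∑ k, v k ^ 2) := by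
    rw [EuclideanSpace.norm_eq]
    congr 1
    exact Finset.sum_congr rfl fun k _ => by rw [WithLp.equiv_symm_apply, WithLp.ofLp_toLp, Real.norm_eq_abs, sq_abs]
  have h' : Real.sqrt (∑ j, (Wᵀ *ᵥ v) j ^ 2) ≤ specNorm W * Real.sqrt (∑ k, v k ^ 2) := by
    rw [← hL, ← hR, ← aux_specNorm_transpose W]
    exact h
  have h2 := mul_le_mul h' h' (Real.sqrt_nonneg _) (le_trans (Real.sqrt_nonneg _) h')
  rw [Real.mul_self_sqrt (Finset.sum_nonneg fun j _ => sq_nonneg _)] at h2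
  calc ∑ j, (Wᵀ *ᵥ v) j ^ 2 ≤ (specNorm W * Real.sqrt (∑ k, v k ^ 2)) *
        (specNorm W * Real.sqrt (∑ k, v k ^ 2)) := h2
    _ = specNorm W ^ 2 * ∑ k, v k ^ 2 := by
        rw [mul_mul_mul_comm, Real.mul_self_sqrt (Finset.sum_nonneg fun k _ => sq_nonneg _)]
        ring

/-- Volumetric ratio bound, per-sample form: for `f x = g (W x)` with Jacobian
of `g` at `W x` given by `J` (so that `∇ₓ f = J W` and
`‖∇_W f‖_F = ‖J‖_F ‖x‖₂`), and `x ≠ 0`,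
`sqrt (det (∇ₓ f (∇ₓ f)ᵀ)) ≤ N^(-N/2) (‖W‖₂/‖x‖₂)^N ‖∇_W f‖_F^N`. -/
theorem volumetric_ratio_bound {d M N : ℕ}
    (W : Matrix (Fin d) (Fin M) ℝ)
    (x : EuclideanSpace ℝ (Fin M)) (hx : x ≠ 0)
    (J : Matrix (Fin N) (Fin d) ℝ) :
    Real.sqrt ((J * W) * (J * W)ᵀ).det ≤
      (N : ℝ) ^ (-(N : ℝ) / 2) * (specNorm W / ‖x‖) ^ N *
        (frobNorm J * ‖x‖) ^ N := by
  have hxn : (0 : ℝ) < ‖x‖ := norm_pos_iff.mpr hx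
  -- simplify the RHS
  have hRHS : (N : ℝ) ^ (-(N : ℝ) / 2) * (specNorm W / ‖x‖) ^ N * (frobNorm J * ‖x‖) ^ N
      = (N : ℝ) ^ (-(N : ℝ) / 2) * (specNorm W * frobNorm J) ^ N := by
    rw [div_pow, mul_pow, mul_pow]
    field_simp
  rw [hRHS]
  rcases Nat.eq_zero_or_pos N with hN | hN
  · subst hN
    simp [Matrix.det_fin_zero]
  -- the Gram matrix
  set A : Matrix (Fin N) (Fin M) ℝ := J * W with hA
  set G : Matrix (Fin N) (Fin N) ℝ := A * Aᵀ with hG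
  have hGpsd : G.PosSemidef := by
    rw [hG, ← Matrix.conjTranspose_eq_transpose_of_trivial]
    exact Matrix.posSemidef_self_mul_conjTranspose A
  have hGh : G.IsHermitian := hGpsd.1
  -- trace of G equals squared Frobenius norm of A
  have htrace : G.trace = ∑ i, ∑ j, (A i j) ^ 2 := by
    rw [hG, Matrix.trace]
    congr 1; ext i
    simp [Matrix.diag, Matrix.mul_apply, sq]
  -- Frobenius bound on A
  have hfrob : ∑ i, ∑ j, (A i j) ^ 2 ≤ specNorm W ^ 2 * ∑ i, ∑ k, (J i k) ^ 2 := by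
    rw [Finset.mul_sum]
    apply Finset.sum_le_sum
    intro i _
    have hrow : ∀ j, A i j = (Wᵀ *ᵥ (J i)) j := by
      intro j
      simp [hA, Matrix.mul_apply, Matrix.mulVec, dotProduct, Matrix.transpose_apply,
        mul_comm]
    calc ∑ j, (A i j) ^ 2 = ∑ j, (Wᵀ *ᵥ (J i)) j ^ 2 := by simp_rw [hrow]
      _ ≤ specNorm W ^ 2 * ∑ k, (J i k) ^ 2 := aux_mulVec_bound W (J i)
  -- determinant bound via AM-GM
  have hdet : G.det = ∏ i, hGh.eigenvalues i := by
    have := hGh.det_eq_prod_eigenvalues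
    exact_mod_cast this
  have htr : G.trace = ∑ i, hGh.eigenvalues i := aux_trace_eq_sum_eigenvalues hGh
  have hdet_le : G.det ≤ (G.trace / N) ^ N := by
    rw [hdet, htr]
    exact aux_amgm hN _ (fun i => hGpsd.eigenvalues_nonneg i)
  have hS : 0 ≤ specNorm W := norm_nonneg _
  have hF : 0 ≤ frobNorm J := Real.sqrt_nonneg _
  have hFsq : frobNorm J ^ 2 = ∑ i, ∑ k, (J i k) ^ 2 := by
    rw [frobNorm, Real.sq_sqrt]
    exact Finset.sum_nonneg fun i _ => Finset.sum_nonneg fun k _ => sq_nonneg _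
  have htr_le : G.trace / N ≤ specNorm W ^ 2 * frobNorm J ^ 2 / N := by
    apply div_le_div_of_nonneg_right _ (Nat.cast_nonneg N)
    · rw [htrace, hFsq]; exact hfrob
  have hdet_le2 : G.det ≤ (specNorm W ^ 2 * frobNorm J ^ 2 / N) ^ N := by
    refine le_trans hdet_le (pow_le_pow_left₀ ?_ htr_le N)
    rw [htr]
    apply div_nonneg _ (Nat.cast_nonneg N)
    exact Finset.sum_nonneg fun i _ => hGpsd.eigenvalues_nonneg i
  -- take square roots
  have hsqrt : Real.sqrt G.det ≤ Real.sqrt ((specNorm W ^ 2 * frobNorm J ^ 2 / N) ^ N) :=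
    Real.sqrt_le_sqrt hdet_le2
  refine le_trans hsqrt (le_of_eq ?_)
  have hNpos : (0 : ℝ) < N := by exact_mod_cast hN
  have key : (specNorm W ^ 2 * frobNorm J ^ 2 / N) ^ N
      = ((N : ℝ) ^ (-(N : ℝ) / 2) * (specNorm W * frobNorm J) ^ N) ^ 2 := by
    rw [mul_pow, ← Real.rpow_natCast ((N : ℝ) ^ (-(N : ℝ) / 2)) 2,
      ← Real.rpow_mul (Nat.cast_nonneg N)]
    have he : -(N : ℝ) / 2 * (2 : ℕ) = -(N : ℝ) := by push_cast; ring
    rw [he, Real.rpow_neg (Nat.cast_nonneg N), Real.rpow_natCast]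
    rw [← pow_mul, mul_comm N 2, pow_mul, mul_pow, div_pow]
    field_simp
  rw [key, Real.sqrt_sq (mul_nonneg (Real.rpow_nonneg (Nat.cast_nonneg N) _)
    (pow_nonneg (mul_nonneg hS hF) N))]
end

section
/- (Approximate sharpness formula) Under the setting of the previous statement, suppose instead only that ‖f(x_i,θ) − y_i‖ < ε for all i and that ‖∇²_{θ_j} f(x_i,θ)‖ < M for all i and all coordinates j ∈ {1,...,m}. Then |tr(∇²L(θ)) − (1/n) Σ_i ‖∇_θ f(x_i,θ)‖_F^2| < m M ε. -/
open scoped RealInnerProductSpace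


/-- The quadratic training loss `L θ = (1/(2n)) ∑ᵢ ‖f (xᵢ, θ) - yᵢ‖²`. -/
noncomputable def sqLoss {n N m : ℕ}
    (f : Fin n → EuclideanSpace ℝ (Fin m) → EuclideanSpace ℝ (Fin N))
    (y : Fin n → EuclideanSpace ℝ (Fin N))
    (θ : EuclideanSpace ℝ (Fin m)) : ℝ :=
  (1 / (2 * (n : ℝ))) * ∑ i, ‖f i θ - y i‖ ^ 2

/-- Approximate sharpness formula: if `‖f (xᵢ, θ) - yᵢ‖ < ε` for all `i`, and
the second partial derivatives along every coordinate direction are bounded by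
`M₀`, then the trace of the Hessian of `L` at `θ` differs from
`(1/n) ∑ᵢ ‖∇_θ f (xᵢ, θ)‖_F²` by less than `m · M₀ · ε`. -/
theorem approx_sharpness_formula {n N m : ℕ} (hn : 0 < n) (hm : 0 < m)
    (f : Fin n → EuclideanSpace ℝ (Fin m) → EuclideanSpace ℝ (Fin N))
    (y : Fin n → EuclideanSpace ℝ (Fin N))
    (hf : ∀ i, ContDiff ℝ 2 (f i))
    (θ : EuclideanSpace ℝ (Fin m)) (ε M₀ : ℝ)
    (hint : ∀ i, ‖f i θ - y i‖ < ε)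
    (hM : ∀ i, ∀ j : Fin m,
      ‖fderiv ℝ (fun t => fderiv ℝ (f i) t (EuclideanSpace.single j 1)) θ
          (EuclideanSpace.single j 1)‖ < M₀) :
    |(∑ j : Fin m,
          fderiv ℝ (fun t => fderiv ℝ (sqLoss f y) t (EuclideanSpace.single j 1)) θ
            (EuclideanSpace.single j 1)) -
        (1 / (n : ℝ)) *
          ∑ i, ∑ j : Fin m, ‖fderiv ℝ (f i) θ (EuclideanSpace.single j 1)‖ ^ 2|
      < (m : ℝ) * M₀ * ε := by
  set c : ℝ := 1 / (2 * (n : ℝ)) with hc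
  -- differentiability facts
  have hfd : ∀ i, Differentiable ℝ (f i) := fun i => (hf i).differentiable (by norm_num)
  have hsub : ∀ i (t : EuclideanSpace ℝ (Fin m)),
      HasFDerivAt (fun θ => f i θ - y i) (fderiv ℝ (f i) t) t := fun i t =>
    ((hfd i t).hasFDerivAt).sub_const _
  -- first derivative of sqLoss
  have hL : ∀ t : EuclideanSpace ℝ (Fin m),
      HasFDerivAt (sqLoss f y)
        (c • ∑ i : Fin n,
          (fderivInnerCLM ℝ (f i t - y i, f i t - y i)).comp
            ((fderiv ℝ (f i) t).prod (fderiv ℝ (f i) t))) t := by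
    intro t
    have : sqLoss f y = fun θ => c * ∑ i, ⟪f i θ - y i, f i θ - y i⟫ := by
      funext θ; simp only [sqLoss, real_inner_self_eq_norm_sq, hc]
    rw [this]
    exact HasFDerivAt.const_mul (HasFDerivAt.fun_sum fun i _ => (hsub i t).inner ℝ (hsub i t)) _
  -- pointwise formula for the first derivative
  have hL1 : ∀ (t : EuclideanSpace ℝ (Fin m)) (v : EuclideanSpace ℝ (Fin m)),
      fderiv ℝ (sqLoss f y) t v
        = c * ∑ i, (⟪f i t - y i, fderiv ℝ (f i) t v⟫ + ⟪fderiv ℝ (f i) t v, f i t - y i⟫) := by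
    intro t v
    rw [(hL t).fderiv]
    simp [Finset.mul_sum]
  -- second derivative along direction v
  have hL2 : ∀ v : EuclideanSpace ℝ (Fin m),
      fderiv ℝ (fun t => fderiv ℝ (sqLoss f y) t v) θ v
        = c * ∑ i, (2 * ‖fderiv ℝ (f i) θ v‖ ^ 2
            + 2 * ⟪f i θ - y i, fderiv ℝ (fun t => fderiv ℝ (f i) t v) θ v⟫) := by
    intro v
    have heq : (fun t => fderiv ℝ (sqLoss f y) t v)
        = fun t => c * ∑ i, (⟪f i t - y i, fderiv ℝ (f i) t v⟫
            + ⟪fderiv ℝ (f i) t v, f i t - y i⟫) := funext fun t => hL1 t v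
    rw [heq]
    -- differentiability of t ↦ fderiv ℝ (f i) t v
    have hdfv : ∀ i, DifferentiableAt ℝ (fun t => fderiv ℝ (f i) t v) θ := by
      intro i
      have h1 : ContDiff ℝ 1 (fderiv ℝ (f i)) := (hf i).fderiv_right (by norm_num)
      exact ((ContinuousLinearMap.apply ℝ (EuclideanSpace ℝ (Fin N)) v).contDiff.comp
        h1).differentiable one_ne_zero θ
    have hG : ∀ i, HasFDerivAt (fun t => fderiv ℝ (f i) t v)
        (fderiv ℝ (fun t => fderiv ℝ (f i) t v) θ) θ := fun i => (hdfv i).hasFDerivAt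
    have h2 : HasFDerivAt (fun t => c * ∑ i, (⟪f i t - y i, fderiv ℝ (f i) t v⟫
            + ⟪fderiv ℝ (f i) t v, f i t - y i⟫))
        (c • ∑ i : Fin n,
          (((fderivInnerCLM ℝ (f i θ - y i, fderiv ℝ (f i) θ v)).comp
              ((fderiv ℝ (f i) θ).prod (fderiv ℝ (fun t => fderiv ℝ (f i) t v) θ)))
           + ((fderivInnerCLM ℝ (fderiv ℝ (f i) θ v, f i θ - y i)).comp
              ((fderiv ℝ (fun t => fderiv ℝ (f i) t v) θ).prod (fderiv ℝ (f i) θ))))) θ :=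
      HasFDerivAt.const_mul (HasFDerivAt.fun_sum fun i _ =>
        ((hsub i θ).inner ℝ (hG i)).add ((hG i).inner ℝ (hsub i θ))) _
    rw [h2.fderiv]
    simp only [ContinuousLinearMap.smul_apply, ContinuousLinearMap.sum_apply,
      ContinuousLinearMap.add_apply, ContinuousLinearMap.comp_apply,
      ContinuousLinearMap.prod_apply, fderivInnerCLM_apply, smul_eq_mul]
    congr 1
    refine Finset.sum_congr rfl fun i _ => ?_
    rw [real_inner_self_eq_norm_sq, real_inner_comm (fderiv ℝ (fun t => fderiv ℝ (f i) t v) θ v)]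
    ring
  -- abbreviations
  set v : Fin m → EuclideanSpace ℝ (Fin m) := fun j => EuclideanSpace.single j 1 with hv
  have hnpos : (0 : ℝ) < n := Nat.cast_pos.mpr hn
  set A : ℝ := ∑ i, ∑ j : Fin m, ‖fderiv ℝ (f i) θ (v j)‖ ^ 2 with hA
  set B : ℝ := ∑ i, ∑ j : Fin m,
      ⟪f i θ - y i, fderiv ℝ (fun t => fderiv ℝ (f i) t (v j)) θ (v j)⟫ with hB
  have htr : (∑ j : Fin m, fderiv ℝ (fun t => fderiv ℝ (sqLoss f y) t (v j)) θ (v j))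
      = c * (2 * A + 2 * B) := by
    rw [Finset.sum_congr rfl (fun j _ => hL2 (v j)), ← Finset.mul_sum, Finset.sum_comm]
    rw [hA, hB]
    simp [Finset.sum_add_distrib, Finset.mul_sum]
  rw [htr]
  have hdiff : c * (2 * A + 2 * B) - (1 / (n : ℝ)) * A = (1 / (n : ℝ)) * B := by
    rw [hc]; field_simp; ring
  rw [hdiff, abs_mul, abs_of_pos (by positivity : (0:ℝ) < 1 / (n:ℝ))]
  -- bound |B|
  have hterm : ∀ i j, |⟪f i θ - y i, fderiv ℝ (fun t => fderiv ℝ (f i) t (v j)) θ (v j)⟫|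
      < ε * M₀ := fun i j =>
    lt_of_le_of_lt (abs_real_inner_le_norm _ _)
      (mul_lt_mul'' (hint i) (hM i j) (norm_nonneg _) (norm_nonneg _))
  have hmne : (Finset.univ : Finset (Fin m)).Nonempty := ⟨⟨0, hm⟩, Finset.mem_univ _⟩
  have hnne : (Finset.univ : Finset (Fin n)).Nonempty := ⟨⟨0, hn⟩, Finset.mem_univ _⟩
  have hrow : ∀ i : Fin n, ∑ j : Fin m,
      |⟪f i θ - y i, fderiv ℝ (fun t => fderiv ℝ (f i) t (v j)) θ (v j)⟫|
      < (m : ℝ) * (ε * M₀) := by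
    intro i
    calc ∑ j : Fin m, |⟪f i θ - y i, fderiv ℝ (fun t => fderiv ℝ (f i) t (v j)) θ (v j)⟫|
        < ∑ _j : Fin m, (ε * M₀) :=
          Finset.sum_lt_sum_of_nonempty hmne fun j _ => hterm i j
      _ = (m : ℝ) * (ε * M₀) := by simp [mul_comm]
  have hBbound : |B| < (n : ℝ) * ((m : ℝ) * (ε * M₀)) := by
    calc |B| ≤ ∑ i, |∑ j : Fin m,
          ⟪f i θ - y i, fderiv ℝ (fun t => fderiv ℝ (f i) t (v j)) θ (v j)⟫| :=
          Finset.abs_sum_le_sum_abs _ _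
      _ ≤ ∑ i, ∑ j : Fin m,
          |⟪f i θ - y i, fderiv ℝ (fun t => fderiv ℝ (f i) t (v j)) θ (v j)⟫| :=
          Finset.sum_le_sum fun i _ => Finset.abs_sum_le_sum_abs _ _
      _ < ∑ _i : Fin n, (m : ℝ) * (ε * M₀) :=
          Finset.sum_lt_sum_of_nonempty hnne fun i _ => hrow i
      _ = (n : ℝ) * ((m : ℝ) * (ε * M₀)) := by simp [mul_comm]
  calc (1 / (n : ℝ)) * |B| < (1 / (n : ℝ)) * ((n : ℝ) * ((m : ℝ) * (ε * M₀))) :=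
        mul_lt_mul_of_pos_left hBbound (by positivity)
    _ = (m : ℝ) * M₀ * ε := by field_simp
end
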